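/- arXiv:1805.08770 — 6 statements merged into one kernel-verified Lean document; each statement's English description precedes it below -/
import Mathlib

section
/- Let λ₁, λ₂ be dominant integral coweights such that λ₁ − λ₂ lies in the coroot lattice ℤΦ^∨. Then there exists a dominant integral coweight μ ∈ Λ⁺ with μ ≤ λ₁ and μ ≤ λ₂ such that (λ₁ − 𝖣) ∩ (λ₂ − 𝖣) = μ − 𝖣 inside Λ_ℚ. In particular 𝖯_{λ₁} ∩ 𝖯_{λ₂} = 𝖯_μ. (Paper's Lemma on intersections of dominant coweight polytopes, Lemma 3.20.) -/
/-!
Setting: a finite reduced crystallographic root system of rank `r`, given by simple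
coroots `coroot i = αᵢ^∨` in a `ℚ`-vector space `V` (playing the role of `Λ_ℚ`) together
with the pairing functionals `pairing i = ⟨αᵢ, ·⟩` against the simple roots, and a lattice
of coweights `Λ ⊆ V` containing the coroot lattice on which the simple roots take
integral values.
-/

/-- The cone `𝖣 ⊆ Λ_ℚ` of nonnegative rational combinations of the simple coroots. -/
def Dcone {V : Type*} [AddCommGroup V] [Module ℚ V] {r : ℕ} (coroot : Fin r → V) : Set V :=
  {ν | ∃ c : Fin r → ℚ, (∀ i, 0 ≤ c i) ∧ ν = ∑ i, c i • coroot i}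

/-- `μ ≤ lam` : `lam - μ` is a nonnegative *integral* combination of the simple coroots. -/
def leZ {V : Type*} [AddCommGroup V] [Module ℚ V] {r : ℕ} (coroot : Fin r → V)
    (μ lam : V) : Prop :=
  ∃ c : Fin r → ℕ, lam - μ = ∑ i, (c i : ℚ) • coroot i

/-- `μ ≤_ℚ lam` : `lam - μ ∈ 𝖣`. -/
def leQ {V : Type*} [AddCommGroup V] [Module ℚ V] {r : ℕ} (coroot : Fin r → V)
    (μ lam : V) : Prop :=
  lam - μ ∈ Dcone coroot

/-- A (rational) coweight is dominant if its pairing with every simple root is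
nonnegative. -/
def IsDominant {V : Type*} [AddCommGroup V] [Module ℚ V] {r : ℕ}
    (pairing : Fin r → V →ₗ[ℚ] ℚ) (ν : V) : Prop :=
  ∀ i, 0 ≤ pairing i ν

/-- The dominant coweight polytope `𝖯_lam = Λ_ℚ⁺ ∩ (lam − 𝖣)`. -/
def domPolytope {V : Type*} [AddCommGroup V] [Module ℚ V] {r : ℕ}
    (coroot : Fin r → V) (pairing : Fin r → V →ₗ[ℚ] ℚ) (lam : V) : Set V :=
  {ν | IsDominant pairing ν ∧ leQ coroot ν lam}

/-!
Write `lam₁ - lam₂ = ∑ aᵢ αᵢ^∨` with `a` integral and put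
`μ = lam₁ - ∑ aᵢ⁺ αᵢ^∨ = lam₂ - ∑ aᵢ⁻ αᵢ^∨`. Since the simple coroots are linearly
independent, membership in `x - 𝖣` is read off coordinatewise, and as `aᵢ⁺` or `aᵢ⁻`
vanishes for each `i`, the two cones intersect in `μ - 𝖣`. For dominance of `μ` at `j`,
subtract from whichever of `lam₁`, `lam₂` has coefficient `0` at `j`: the remaining
coroots `αᵢ^∨`, `i ≠ j`, pair nonpositively with `αⱼ`.
-/

open Finset

section RootCone

variable {V : Type*} [AddCommGroup V] [Module ℚ V] {r : ℕ} {coroot : Fin r → V}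

theorem add_mem_Dcone {x y : V} (hx : x ∈ Dcone coroot) (hy : y ∈ Dcone coroot) :
    x + y ∈ Dcone coroot := by
  obtain ⟨c, hc, rfl⟩ := hx
  obtain ⟨d, hd, rfl⟩ := hy
  refine ⟨c + d, fun i => add_nonneg (hc i) (hd i), ?_⟩
  simp only [Pi.add_apply, add_smul, sum_add_distrib]

theorem inter_setOf_sub_mem_Dcone (hli : LinearIndependent ℚ coroot) {lam₁ lam₂ μ : V}
    {p q : Fin r → ℚ} (hp0 : ∀ i, 0 ≤ p i) (hq0 : ∀ i, 0 ≤ q i) (hpq : ∀ i, p i = 0 ∨ q i = 0)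
    (hp : lam₁ - μ = ∑ i, p i • coroot i) (hq : lam₂ - μ = ∑ i, q i • coroot i) :
    {ν | lam₁ - ν ∈ Dcone coroot} ∩ {ν | lam₂ - ν ∈ Dcone coroot}
      = {ν | μ - ν ∈ Dcone coroot} := by
  ext ν
  simp only [Set.mem_inter_iff, Set.mem_ofPred_eq]
  constructor
  · rintro ⟨⟨c, hc0, hc⟩, ⟨d, hd0, hd⟩⟩
    have hμc : μ - ν = ∑ i, (c i - p i) • coroot i := by
      simp only [sub_smul, sum_sub_distrib, ← hc, ← hp, sub_sub_sub_cancel_left]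
    have hμd : μ - ν = ∑ i, (d i - q i) • coroot i := by
      simp only [sub_smul, sum_sub_distrib, ← hd, ← hq, sub_sub_sub_cancel_left]
    have hcd := Fintype.linearIndependent_iffₛ.mp hli _ _ (hμc.symm.trans hμd)
    refine ⟨fun i => c i - p i, fun i => ?_, hμc⟩
    rcases hpq i with h | h
    · linarith [hc0 i]
    · linarith [hd0 i, hcd i]
  · intro hμν
    refine ⟨?_, ?_⟩
    · rw [← sub_add_sub_cancel lam₁ μ ν, hp]
      exact add_mem_Dcone ⟨p, hp0, rfl⟩ hμν
    · rw [← sub_add_sub_cancel lam₂ μ ν, hq]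
      exact add_mem_Dcone ⟨q, hq0, rfl⟩ hμν

theorem domPolytope_inter_eq {pairing : Fin r → V →ₗ[ℚ] ℚ} {lam₁ lam₂ μ : V}
    (h : {ν | lam₁ - ν ∈ Dcone coroot} ∩ {ν | lam₂ - ν ∈ Dcone coroot}
      = {ν | μ - ν ∈ Dcone coroot}) :
    domPolytope coroot pairing lam₁ ∩ domPolytope coroot pairing lam₂
      = domPolytope coroot pairing μ := by
  ext ν
  have hν := Set.ext_iff.mp h ν
  simp only [Set.mem_inter_iff, Set.mem_ofPred_eq] at hν
  simp only [domPolytope, leQ, Set.mem_inter_iff, Set.mem_ofPred_eq, ← hν]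
  tauto

variable {pairing : Fin r → V →ₗ[ℚ] ℚ}

theorem pairing_sub_sum_nonneg (hoff : ∀ i j, i ≠ j → pairing i (coroot j) ≤ 0)
    {c : Fin r → ℚ} (hc : ∀ i, 0 ≤ c i) {j : Fin r} (hcj : c j = 0) {ν : V}
    (hν : 0 ≤ pairing j ν) : 0 ≤ pairing j (ν - ∑ i, c i • coroot i) := by
  have hsum : ∑ i, c i * pairing j (coroot i) ≤ 0 := by
    refine sum_nonpos fun i _ => ?_
    rcases eq_or_ne j i with rfl | hji
    · simp [hcj]
    · exact mul_nonpos_of_nonneg_of_nonpos (hc i) (hoff j i hji)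
  simp only [map_sub, map_sum, map_smul, smul_eq_mul]
  linarith

theorem isDominant_of_sub_eq_sum (hoff : ∀ i j, i ≠ j → pairing i (coroot j) ≤ 0)
    {lam₁ lam₂ μ : V} {p q : Fin r → ℚ} (hp0 : ∀ i, 0 ≤ p i) (hq0 : ∀ i, 0 ≤ q i)
    (hpq : ∀ i, p i = 0 ∨ q i = 0)
    (hp : lam₁ - μ = ∑ i, p i • coroot i) (hq : lam₂ - μ = ∑ i, q i • coroot i)
    (h₁ : IsDominant pairing lam₁) (h₂ : IsDominant pairing lam₂) :
    IsDominant pairing μ := by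
  intro j
  rcases hpq j with h | h
  · rw [← sub_sub_cancel lam₁ μ, hp]
    exact pairing_sub_sum_nonneg hoff hp0 h (h₁ j)
  · rw [← sub_sub_cancel lam₂ μ, hq]
    exact pairing_sub_sum_nonneg hoff hq0 h (h₂ j)

end RootCone

theorem polytope_intersection_general
    {V : Type*} [AddCommGroup V] [Module ℚ V] {r : ℕ}
    (coroot : Fin r → V) (pairing : Fin r → V →ₗ[ℚ] ℚ) (Λ : AddSubgroup V)
    (hli : LinearIndependent ℚ coroot)
    (hoff : ∀ i j, i ≠ j → pairing i (coroot j) ≤ 0)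
    (hΛcoroot : ∀ i, coroot i ∈ Λ)
    (lam₁ lam₂ : V) (h₁Λ : lam₁ ∈ Λ)
    (h₁dom : IsDominant pairing lam₁) (h₂dom : IsDominant pairing lam₂)
    (hdiff : ∃ c : Fin r → ℤ, lam₁ - lam₂ = ∑ i, (c i : ℚ) • coroot i) :
    ∃ μ : V, μ ∈ Λ ∧ IsDominant pairing μ ∧ leZ coroot μ lam₁ ∧ leZ coroot μ lam₂ ∧
      {ν : V | lam₁ - ν ∈ Dcone coroot} ∩ {ν : V | lam₂ - ν ∈ Dcone coroot}
        = {ν : V | μ - ν ∈ Dcone coroot} ∧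
      domPolytope coroot pairing lam₁ ∩ domPolytope coroot pairing lam₂
        = domPolytope coroot pairing μ := by
  obtain ⟨a, ha⟩ := hdiff
  set p : Fin r → ℕ := fun i => (a i).toNat
  set q : Fin r → ℕ := fun i => (-a i).toNat
  set μ := lam₁ - ∑ i, (p i : ℚ) • coroot i
  have hp : lam₁ - μ = ∑ i, (p i : ℚ) • coroot i := sub_sub_cancel _ _
  have hq : lam₂ - μ = ∑ i, (q i : ℚ) • coroot i := by
    have hqa : ∀ i, (q i : ℚ) = p i - a i := fun i => by
      have := congrArg (Int.cast : ℤ → ℚ) (a i).toNat_sub_toNat_neg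
      push_cast at this
      linarith
    simp only [hqa, sub_smul, sum_sub_distrib, ← ha, μ]
    abel
  have hpq : ∀ i, (p i : ℚ) = 0 ∨ (q i : ℚ) = 0 := fun i => by
    simp only [p, q, Nat.cast_eq_zero]
    omega
  have hp0 : ∀ i, (0 : ℚ) ≤ p i := fun i => (p i).cast_nonneg
  have hq0 : ∀ i, (0 : ℚ) ≤ q i := fun i => (q i).cast_nonneg
  have hcone := inter_setOf_sub_mem_Dcone hli hp0 hq0 hpq hp hq
  have hμΛ : μ ∈ Λ := Λ.sub_mem h₁Λ <| Λ.sum_mem fun i _ => by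
    rw [Nat.cast_smul_eq_nsmul]
    exact Λ.nsmul_mem (hΛcoroot i) _
  exact ⟨μ, hμΛ, isDominant_of_sub_eq_sum hoff hp0 hq0 hpq hp hq h₁dom h₂dom, ⟨p, hp⟩, ⟨q, hq⟩,
    hcone, domPolytope_inter_eq hcone⟩

/-- Lemma 3.20: if `lam₁, lam₂ ∈ Λ⁺` and `lam₁ - lam₂` lies in the coroot lattice, then
there is `μ ∈ Λ⁺` with `μ ≤ lam₁`, `μ ≤ lam₂`,
`(lam₁ − 𝖣) ∩ (lam₂ − 𝖣) = μ − 𝖣`, and in particular `𝖯_{lam₁} ∩ 𝖯_{lam₂} = 𝖯_μ`. -/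
theorem polytope_intersection
    {V : Type*} [AddCommGroup V] [Module ℚ V] {r : ℕ}
    (coroot : Fin r → V) (pairing : Fin r → V →ₗ[ℚ] ℚ) (Λ : AddSubgroup V)
    (hli : LinearIndependent ℚ coroot)
    (hdiag : ∀ i, pairing i (coroot i) = 2)
    (hoff : ∀ i j, i ≠ j → pairing i (coroot j) ≤ 0)
    (hΛcoroot : ∀ i, coroot i ∈ Λ)
    (hΛint : ∀ μ ∈ Λ, ∀ i, ∃ n : ℤ, pairing i μ = (n : ℚ))
    (lam₁ lam₂ : V) (h₁Λ : lam₁ ∈ Λ) (h₂Λ : lam₂ ∈ Λ)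
    (h₁dom : IsDominant pairing lam₁) (h₂dom : IsDominant pairing lam₂)
    (hdiff : ∃ c : Fin r → ℤ, lam₁ - lam₂ = ∑ i, (c i : ℚ) • coroot i) :
    ∃ μ : V, μ ∈ Λ ∧ IsDominant pairing μ ∧ leZ coroot μ lam₁ ∧ leZ coroot μ lam₂ ∧
      {ν : V | lam₁ - ν ∈ Dcone coroot} ∩ {ν : V | lam₂ - ν ∈ Dcone coroot}
        = {ν : V | μ - ν ∈ Dcone coroot} ∧
      domPolytope coroot pairing lam₁ ∩ domPolytope coroot pairing lam₂
        = domPolytope coroot pairing μ :=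
  polytope_intersection_general coroot pairing Λ hli hoff hΛcoroot lam₁ lam₂ h₁Λ h₁dom h₂dom hdiff
end

section
/- Fix λ₀ ∈ Λ. For every dominant rational coweight ν ∈ Λ_ℚ⁺ with ν − λ₀ in the ℚ-span ℚΦ^∨ of the coroots, there exists a unique λ ∈ Λ⁺ with λ − λ₀ ∈ ℤΦ^∨ and ν ∈ 𝖯_λ°. Consequently the sets 𝖯_λ° for λ ∈ Λ⁺ with λ ≡ λ₀ mod ℤΦ^∨ form a partition of Λ_ℚ⁺ ∩ (λ₀ + ℚΦ^∨). (Stratification part of the paper's Corollary 3.21.) -/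
/-- The open stratum `𝖯_lam° = 𝖯_lam \ ⋃_{μ ∈ Λ⁺, μ ≤ lam, μ ≠ lam} 𝖯_μ`. -/
def openStratum {V : Type*} [AddCommGroup V] [Module ℚ V] {r : ℕ}
    (coroot : Fin r → V) (pairing : Fin r → V →ₗ[ℚ] ℚ) (Λ : AddSubgroup V) (lam : V) :
    Set V :=
  domPolytope coroot pairing lam \
    ⋃ μ ∈ {μ : V | μ ∈ Λ ∧ IsDominant pairing μ ∧ leZ coroot μ lam ∧ μ ≠ lam},
      domPolytope coroot pairing μ

/-!
Write `ν = lam₀ + ∑ qᵢ αᵢ^∨`. A point `lam = lam₀ + ∑ mᵢ αᵢ^∨` of the coset `lam₀ + ℤΦ^∨` is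
dominant with `ν ∈ 𝖯_lam` exactly when `m` lies in
`S = {m ∈ ℤ^r | q ≤ m, lam₀ + ∑ mᵢ αᵢ^∨ dominant}`, and then `ν ∈ 𝖯°_lam` exactly when `m` is
minimal in `S`. Since the off-diagonal Cartan entries are nonpositive, `S` is closed under
coordinatewise minimum; it is bounded below by `⌈q⌉`, and it is nonempty because, in finite type,
some nonnegative integral combination of the simple coroots pairs positively with every simple
root. Hence `S` has a least element, which is its unique minimal element.
-/

theorem InfClosed.exists_isLeast {α : Type*} [SemilatticeInf α] [LocallyFiniteOrder α]
    {s : Set α} (hs : InfClosed s) (hne : s.Nonempty) (hbdd : BddBelow s) :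
    ∃ a, IsLeast s a := by
  obtain ⟨b, hb⟩ := hbdd
  obtain ⟨c, hc⟩ := hne
  obtain ⟨a, ⟨has, hba, hac⟩, hmin⟩ :=
    ((Set.finite_Icc b c).inter_of_right s).exists_minimal ⟨c, hc, hb hc, le_rfl⟩
  refine ⟨a, has, fun x hx => ?_⟩
  have hax : a ⊓ x ∈ s := hs has hx
  exact (hmin ⟨hax, hb hax, inf_le_left.trans hac⟩ inf_le_left).trans inf_le_right

theorem exists_pos_mul_eq_intCast {ι : Type*} [Fintype ι] (b : ι → ℚ) :
    ∃ D : ℕ, 0 < D ∧ ∃ z : ι → ℤ, ∀ i, (z i : ℚ) = D * b i := by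
  refine ⟨∏ i, (b i).den, Finset.prod_pos fun i _ => (b i).den_pos, ?_⟩
  choose e he using fun i => Finset.dvd_prod_of_mem (fun i => (b i).den) (Finset.mem_univ i)
  refine ⟨fun i => e i * (b i).num, fun i => ?_⟩
  simp only [he i, ← Rat.mul_den_eq_num, Int.cast_mul, Int.cast_natCast, Nat.cast_mul]
  ring

section Coweights

variable {V : Type*} [AddCommGroup V] [Module ℚ V] {r : ℕ}

variable (coroot : Fin r → V) (pairing : Fin r → V →ₗ[ℚ] ℚ) in
def dominantCoordsAbove (lam₀ : V) (q : Fin r → ℚ) : Set (Fin r → ℤ) :=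
  {m | (∀ i, q i ≤ m i) ∧ IsDominant pairing (lam₀ + ∑ i, (m i : ℚ) • coroot i)}

variable {coroot : Fin r → V} {pairing : Fin r → V →ₗ[ℚ] ℚ}

theorem add_sum_sub_add_sum (x : V) (c d : Fin r → ℚ) :
    (x + ∑ i, d i • coroot i) - (x + ∑ i, c i • coroot i) = ∑ i, (d i - c i) • coroot i := by
  simp [sub_smul, Finset.sum_sub_distrib]

theorem leQ_add_sum_iff (hli : LinearIndependent ℚ coroot) (x : V) (c d : Fin r → ℚ) :
    leQ coroot (x + ∑ i, c i • coroot i) (x + ∑ i, d i • coroot i) ↔ c ≤ d := by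
  rw [leQ, add_sum_sub_add_sum]
  refine ⟨fun ⟨e, he, hsum⟩ i => ?_,
    fun h => ⟨fun i => d i - c i, fun i => sub_nonneg.2 (h i), rfl⟩⟩
  have hcoeff := Fintype.linearIndependent_iffₛ.1 hli _ _ hsum i
  linarith [he i]

theorem leZ_add_sum_iff (hli : LinearIndependent ℚ coroot) (x : V) (m n : Fin r → ℤ) :
    leZ coroot (x + ∑ i, (m i : ℚ) • coroot i) (x + ∑ i, (n i : ℚ) • coroot i) ↔ m ≤ n := by
  rw [leZ, add_sum_sub_add_sum]
  refine ⟨fun ⟨k, hk⟩ i => ?_, fun h => ⟨fun i => (n i - m i).toNat, ?_⟩⟩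
  · have hcoeff := Fintype.linearIndependent_iffₛ.1 hli _ _ hk i
    have hmn : (m i : ℚ) ≤ n i := by linarith [(k i).cast_nonneg (α := ℚ)]
    exact_mod_cast hmn
  · refine Finset.sum_congr rfl fun i _ => ?_
    rw [← Int.cast_natCast, Int.toNat_of_nonneg (sub_nonneg.2 (h i)), Int.cast_sub]

theorem exists_eq_add_sum_of_leZ {x μ : V} {n : Fin r → ℤ}
    (h : leZ coroot μ (x + ∑ i, (n i : ℚ) • coroot i)) :
    ∃ m : Fin r → ℤ, μ = x + ∑ i, (m i : ℚ) • coroot i := by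
  obtain ⟨k, hk⟩ := h
  refine ⟨fun i => n i - k i, ?_⟩
  rw [← sub_sub_cancel (x + _) μ, hk]
  simp [sub_smul, Finset.sum_sub_distrib, add_sub_assoc]

theorem exists_sub_eq_sum_of_leQ {x ν lam : V} {c : Fin r → ℚ}
    (hlam : lam - x = ∑ i, c i • coroot i) (h : leQ coroot ν lam) :
    ∃ d : Fin r → ℚ, ν - x = ∑ i, d i • coroot i := by
  obtain ⟨e, -, he⟩ := h
  refine ⟨fun i => c i - e i, ?_⟩
  rw [← sub_sub_sub_cancel_left x ν lam, hlam, he]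
  simp [sub_smul, Finset.sum_sub_distrib]

theorem add_sum_intCast_smul_mem {Λ : AddSubgroup V} (hcoroot : ∀ i, coroot i ∈ Λ) {x : V}
    (hx : x ∈ Λ) (m : Fin r → ℤ) : x + ∑ i, (m i : ℚ) • coroot i ∈ Λ :=
  Λ.add_mem hx <| Λ.sum_mem fun i _ => by
    rw [Int.cast_smul_eq_zsmul]
    exact Λ.zsmul_mem (hcoroot i) _

theorem pairing_add_sum_le_of_le_of_eq (hoff : ∀ i j, i ≠ j → pairing i (coroot j) ≤ 0) (x : V)
    {c d : Fin r → ℚ} (hcd : c ≤ d) {j : Fin r} (hj : c j = d j) :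
    pairing j (x + ∑ i, d i • coroot i) ≤ pairing j (x + ∑ i, c i • coroot i) := by
  simp only [map_add, map_sum, map_smul, smul_eq_mul]
  refine add_le_add_right (Finset.sum_le_sum fun i _ => ?_) _
  rcases eq_or_ne j i with rfl | hji
  · rw [hj]
  · exact mul_le_mul_of_nonpos_right (hcd i) (hoff j i hji)

theorem IsDominant.add_sum_inf (hoff : ∀ i j, i ≠ j → pairing i (coroot j) ≤ 0) {x : V}
    {c d : Fin r → ℚ} (hc : IsDominant pairing (x + ∑ i, c i • coroot i))
    (hd : IsDominant pairing (x + ∑ i, d i • coroot i)) :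
    IsDominant pairing (x + ∑ i, (c ⊓ d) i • coroot i) := by
  intro j
  rcases le_total (c j) (d j) with h | h
  · exact (hc j).trans (pairing_add_sum_le_of_le_of_eq hoff x inf_le_left (inf_of_le_left h))
  · exact (hd j).trans (pairing_add_sum_le_of_le_of_eq hoff x inf_le_right (inf_of_le_right h))

theorem exists_nonneg_one_le_pairing_sum (hfund : ∃ fcw : Fin r → V,
      (∀ i j, pairing i (fcw j) = if i = j then 1 else 0) ∧ ∀ j, fcw j ∈ Dcone coroot) :
    ∃ z : Fin r → ℤ, 0 ≤ z ∧ ∀ j, 1 ≤ pairing j (∑ i, (z i : ℚ) • coroot i) := by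
  obtain ⟨fcw, hpair, hcone⟩ := hfund
  choose B hB0 hB using hcone
  obtain ⟨D, hD, z, hz⟩ := exists_pos_mul_eq_intCast fun i => ∑ k, B k i
  have hsum : ∑ i, (z i : ℚ) • coroot i = (D : ℚ) • ∑ k, fcw k := by
    simp only [hz, hB, Finset.smul_sum, Finset.sum_smul, mul_smul]
    exact Finset.sum_comm
  refine ⟨z, fun i => ?_, fun j => ?_⟩
  · have hzi : (0 : ℚ) ≤ z i :=
      hz i ▸ mul_nonneg D.cast_nonneg (Finset.sum_nonneg fun k _ => hB0 k i)
    exact_mod_cast hzi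
  · simp [hsum, hpair, Nat.one_le_cast.2 hD]

theorem infClosed_dominantCoordsAbove (hoff : ∀ i j, i ≠ j → pairing i (coroot j) ≤ 0)
    (lam₀ : V) (q : Fin r → ℚ) : InfClosed (dominantCoordsAbove coroot pairing lam₀ q) := by
  rintro m ⟨hqm, hm⟩ m' ⟨hqm', hm'⟩
  refine ⟨fun i => by simpa using le_min (hqm i) (hqm' i), ?_⟩
  simpa using hm.add_sum_inf hoff hm'

theorem bddBelow_dominantCoordsAbove (lam₀ : V) (q : Fin r → ℚ) :
    BddBelow (dominantCoordsAbove coroot pairing lam₀ q) :=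
  ⟨fun i => ⌈q i⌉, fun _ hm i => Int.ceil_le.2 (hm.1 i)⟩

theorem dominantCoordsAbove_nonempty (hfund : ∃ fcw : Fin r → V,
      (∀ i j, pairing i (fcw j) = if i = j then 1 else 0) ∧ ∀ j, fcw j ∈ Dcone coroot)
    (lam₀ : V) (q : Fin r → ℚ) : (dominantCoordsAbove coroot pairing lam₀ q).Nonempty := by
  obtain ⟨z, hz0, hz⟩ := exists_nonneg_one_le_pairing_sum hfund
  set y := lam₀ + ∑ i, (⌈q i⌉ : ℚ) • coroot i
  obtain ⟨t, ht⟩ := exists_nat_ge (∑ j, |pairing j y|)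
  refine ⟨fun i => ⌈q i⌉ + t * z i, fun i => ?_, fun j => ?_⟩
  · have hzi : (0 : ℚ) ≤ z i := by exact_mod_cast hz0 i
    push_cast
    nlinarith [Int.le_ceil (q i), t.cast_nonneg (α := ℚ)]
  · have hy : -pairing j y ≤ t :=
      (neg_le_abs _).trans <| (Finset.single_le_sum (fun j _ => abs_nonneg _)
        (Finset.mem_univ j)).trans ht
    have hpt : lam₀ + ∑ i, ((⌈q i⌉ + t * z i : ℤ) : ℚ) • coroot i
        = y + (t : ℚ) • ∑ i, (z i : ℚ) • coroot i := by
      simp [y, add_smul, mul_smul, Finset.sum_add_distrib, Finset.smul_sum, add_assoc]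
    show 0 ≤ pairing j (lam₀ + ∑ i, ((⌈q i⌉ + t * z i : ℤ) : ℚ) • coroot i)
    rw [hpt, map_add, map_smul, smul_eq_mul]
    nlinarith [hz j, t.cast_nonneg (α := ℚ)]

theorem mem_openStratum_iff_minimal (hli : LinearIndependent ℚ coroot) {Λ : AddSubgroup V}
    (hcoroot : ∀ i, coroot i ∈ Λ) {lam₀ : V} (hlam₀ : lam₀ ∈ Λ) {q : Fin r → ℚ}
    (hν : IsDominant pairing (lam₀ + ∑ i, q i • coroot i)) {m : Fin r → ℤ}
    (hm : IsDominant pairing (lam₀ + ∑ i, (m i : ℚ) • coroot i)) :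
    lam₀ + ∑ i, q i • coroot i ∈
        openStratum coroot pairing Λ (lam₀ + ∑ i, (m i : ℚ) • coroot i) ↔
      Minimal (· ∈ dominantCoordsAbove coroot pairing lam₀ q) m := by
  have hP : ∀ m' : Fin r → ℤ, lam₀ + ∑ i, q i • coroot i ∈
      domPolytope coroot pairing (lam₀ + ∑ i, (m' i : ℚ) • coroot i) ↔ ∀ i, q i ≤ m' i :=
    fun m' => (and_iff_right hν).trans (leQ_add_sum_iff hli _ _ _)
  simp only [minimal_iff_forall_lt, openStratum, Set.mem_sdiff, Set.mem_iUnion, exists_prop,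
    not_exists, not_and, hP]
  constructor
  · rintro ⟨hqm, hmin⟩
    refine ⟨⟨hqm, hm⟩, fun m' hlt hm' => hmin _ ⟨add_sum_intCast_smul_mem hcoroot hlam₀ m',
      hm'.2, (leZ_add_sum_iff hli _ _ _).2 hlt.le, fun h => hlt.not_ge ?_⟩ ((hP m').2 hm'.1)⟩
    exact (leZ_add_sum_iff hli _ _ _).1 ⟨0, by rw [h]; simp⟩
  · rintro ⟨⟨hqm, -⟩, hmin⟩
    refine ⟨hqm, ?_⟩
    rintro μ ⟨-, hμ, hle, hne⟩ hνμ
    obtain ⟨m', rfl⟩ := exists_eq_add_sum_of_leZ hle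
    rw [leZ_add_sum_iff hli] at hle
    exact hmin (hle.lt_of_ne fun h => hne (h ▸ rfl)) ⟨(hP m').1 hνμ, hμ⟩

end Coweights

theorem open_strata_partition_general
    {V : Type*} [AddCommGroup V] [Module ℚ V] {r : ℕ}
    (coroot : Fin r → V) (pairing : Fin r → V →ₗ[ℚ] ℚ) (Λ : AddSubgroup V)
    (hli : LinearIndependent ℚ coroot)
    (hoff : ∀ i j, i ≠ j → pairing i (coroot j) ≤ 0)
    (hΛcoroot : ∀ i, coroot i ∈ Λ)
    (hfund : ∃ fcw : Fin r → V,
      (∀ i j, pairing i (fcw j) = if i = j then 1 else 0) ∧ ∀ j, fcw j ∈ Dcone coroot)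
    (lam₀ : V) (hlam₀ : lam₀ ∈ Λ) :
    (∀ lam : V, lam ∈ Λ → IsDominant pairing lam →
      (∃ c : Fin r → ℤ, lam - lam₀ = ∑ i, (c i : ℚ) • coroot i) →
      openStratum coroot pairing Λ lam ⊆
        {ν : V | IsDominant pairing ν ∧ ∃ c : Fin r → ℚ, ν - lam₀ = ∑ i, c i • coroot i}) ∧
    ∀ ν : V, IsDominant pairing ν →
      (∃ c : Fin r → ℚ, ν - lam₀ = ∑ i, c i • coroot i) →
      ∃! lam : V, lam ∈ Λ ∧ IsDominant pairing lam ∧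
        (∃ c : Fin r → ℤ, lam - lam₀ = ∑ i, (c i : ℚ) • coroot i) ∧
        ν ∈ openStratum coroot pairing Λ lam := by
  refine ⟨fun lam _ _ ⟨c, hc⟩ ν hν => ⟨hν.1.1, exists_sub_eq_sum_of_leQ hc hν.1.2⟩, ?_⟩
  rintro ν hν ⟨q, hq⟩
  obtain rfl := eq_add_of_sub_eq' hq
  obtain ⟨n, hn⟩ := (infClosed_dominantCoordsAbove hoff lam₀ q).exists_isLeast
    (dominantCoordsAbove_nonempty hfund lam₀ q) (bddBelow_dominantCoordsAbove lam₀ q)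
  have hstratum : ∀ m : Fin r → ℤ, IsDominant pairing (lam₀ + ∑ i, (m i : ℚ) • coroot i) →
      (lam₀ + ∑ i, q i • coroot i ∈
        openStratum coroot pairing Λ (lam₀ + ∑ i, (m i : ℚ) • coroot i) ↔ m = n) :=
    fun m hm => (mem_openStratum_iff_minimal hli hΛcoroot hlam₀ hν hm).trans hn.minimal_iff
  refine ⟨lam₀ + ∑ i, (n i : ℚ) • coroot i, ⟨add_sum_intCast_smul_mem hΛcoroot hlam₀ n, hn.1.2,
    ⟨n, add_sub_cancel_left _ _⟩, (hstratum n hn.1.2).2 rfl⟩, ?_⟩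
  rintro lam ⟨-, hdom, ⟨m, hm⟩, hlam⟩
  obtain rfl := eq_add_of_sub_eq' hm
  rw [(hstratum m hdom).1 hlam]

/-- Corollary 3.21 (stratification): fix `lam₀ ∈ Λ`.  Every stratum `𝖯°_lam` with
`lam ∈ Λ⁺`, `lam ≡ lam₀ mod ℤΦ^∨` is contained in `Λ_ℚ⁺ ∩ (lam₀ + ℚΦ^∨)`, and every
dominant rational coweight `ν` with `ν - lam₀ ∈ ℚΦ^∨` lies in `𝖯°_lam` for a *unique*
such `lam`; i.e. these strata form a partition of `Λ_ℚ⁺ ∩ (lam₀ + ℚΦ^∨)`. -/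
theorem open_strata_partition
    {V : Type*} [AddCommGroup V] [Module ℚ V] {r : ℕ}
    (coroot : Fin r → V) (pairing : Fin r → V →ₗ[ℚ] ℚ) (Λ : AddSubgroup V)
    (hli : LinearIndependent ℚ coroot)
    (hdiag : ∀ i, pairing i (coroot i) = 2)
    (hoff : ∀ i j, i ≠ j → pairing i (coroot j) ≤ 0)
    (hΛcoroot : ∀ i, coroot i ∈ Λ)
    (hΛint : ∀ μ ∈ Λ, ∀ i, ∃ n : ℤ, pairing i μ = (n : ℚ))
    (hfund : ∃ fcw : Fin r → V,
      (∀ i j, pairing i (fcw j) = if i = j then 1 else 0) ∧ ∀ j, fcw j ∈ Dcone coroot)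
    (lam₀ : V) (hlam₀ : lam₀ ∈ Λ) :
    (∀ lam : V, lam ∈ Λ → IsDominant pairing lam →
      (∃ c : Fin r → ℤ, lam - lam₀ = ∑ i, (c i : ℚ) • coroot i) →
      openStratum coroot pairing Λ lam ⊆
        {ν : V | IsDominant pairing ν ∧ ∃ c : Fin r → ℚ, ν - lam₀ = ∑ i, c i • coroot i}) ∧
    ∀ ν : V, IsDominant pairing ν →
      (∃ c : Fin r → ℚ, ν - lam₀ = ∑ i, c i • coroot i) →
      ∃! lam : V, lam ∈ Λ ∧ IsDominant pairing lam ∧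
        (∃ c : Fin r → ℤ, lam - lam₀ = ∑ i, (c i : ℚ) • coroot i) ∧
        ν ∈ openStratum coroot pairing Λ lam :=
  open_strata_partition_general coroot pairing Λ hli hoff hΛcoroot hfund lam₀ hlam₀
end

section
/- Let λ, μ₁, μ₂ ∈ Λ⁺ with μ₁ ≤ λ and μ₂ ≤ λ. Then there exists μ₃ ∈ Λ⁺ with μ₃ ≤ μ₁ and μ₃ ≤ μ₂ such that for every tuple (a₁,…,a_r) of natural numbers the following are equivalent: (i) for all i, a_i ≥ ⟨ω_i, λ − μ₁⟩ and a_i ≥ ⟨ω_i, λ − μ₂⟩; (ii) for all i, a_i ≥ ⟨ω_i, λ − μ₃⟩. (This is the coordinate form of the paper's Proposition 3.22: the intersection of the embedded strata i_{μ₁λ}(𝔠₊^{μ₁}) ∩ i_{μ₂λ}(𝔠₊^{μ₂}) inside the 𝒪-points of the extended Steinberg base, 𝒪 = k[[ϖ]], equals i_{μ₃λ}(𝔠₊^{μ₃}), where membership of a point in i_{μλ}(𝔠₊^{μ}) is expressed by the valuations a_i of its coordinates satisfying a_i ≥ ⟨ω_i, λ − μ⟩.) -/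
/-!
Take `n₃ = max n₁ n₂` coordinatewise and `μ₃ = lam - ∑ n₃ᵢ • αᵢ^∨`; the equivalence of the two
systems of inequalities on `a` is then immediate, and `μ₃ ≤ μ₁, μ₂` with integral coefficients.
The point is that `μ₃` is dominant: at an index `i` where, say, `n₃ᵢ = n₁ᵢ`, we have
`μ₃ = μ₁ - ∑ⱼ (n₃ⱼ - n₁ⱼ) • αⱼ^∨` with no `αᵢ^∨` term, and `⟨αᵢ, αⱼ^∨⟩ ≤ 0` for `j ≠ i`,
so `⟨αᵢ, μ₃⟩ ≥ ⟨αᵢ, μ₁⟩ ≥ 0`.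
-/

section

variable {V : Type*} [AddCommGroup V] [Module ℚ V] {ι : Type*} [Fintype ι] (coroot : ι → V)

lemma sub_eq_sum_sub_smul_of_sub_eq_sum {lam μ μ' : V} {m n : ι → ℚ}
    (hμ : lam - μ = ∑ j, m j • coroot j) (hμ' : lam - μ' = ∑ j, n j • coroot j) :
    μ - μ' = ∑ j, (n j - m j) • coroot j := by
  simp only [sub_smul, Finset.sum_sub_distrib, ← hμ, ← hμ']
  abel

lemma natCast_sum_smul_mem {Λ : AddSubgroup V} (hΛ : ∀ i, coroot i ∈ Λ) (n : ι → ℕ) :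
    ∑ i, (n i : ℚ) • coroot i ∈ Λ :=
  Λ.sum_mem fun i _ => by
    rw [Nat.cast_smul_eq_nsmul]
    exact Λ.nsmul_mem (hΛ i) _

lemma apply_sub_sum_smul_nonneg (f : V →ₗ[ℚ] ℚ) {i : ι}
    (hoff : ∀ j, j ≠ i → f (coroot j) ≤ 0) {μ : V} (hμ : 0 ≤ f μ) {c : ι → ℚ}
    (hc : ∀ j, 0 ≤ c j) (hci : c i = 0) :
    0 ≤ f (μ - ∑ j, c j • coroot j) := by
  have hsum : ∑ j, c j * f (coroot j) ≤ 0 := Finset.sum_nonpos fun j _ => by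
    rcases eq_or_ne j i with rfl | hji
    · simp [hci]
    · exact mul_nonpos_of_nonneg_of_nonpos (hc j) (hoff j hji)
  simpa [map_sum] using hsum.trans hμ

end

section

variable {V : Type*} [AddCommGroup V] [Module ℚ V] {r : ℕ} (coroot : Fin r → V)

lemma leZ_of_sub_eq_sum {lam μ μ' : V} {m n : Fin r → ℕ}
    (hμ : lam - μ = ∑ j, (m j : ℚ) • coroot j) (hμ' : lam - μ' = ∑ j, (n j : ℚ) • coroot j)
    (hmn : m ≤ n) : leZ coroot μ' μ := by
  refine ⟨n - m, ?_⟩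
  rw [sub_eq_sum_sub_smul_of_sub_eq_sum coroot hμ hμ']
  simp [Nat.cast_sub (hmn _)]

lemma pairing_nonneg_of_coeff_eq (pairing : Fin r → V →ₗ[ℚ] ℚ)
    (hoff : ∀ i j, i ≠ j → pairing i (coroot j) ≤ 0) {lam μ μ' : V} {m n : Fin r → ℕ}
    (hμ : lam - μ = ∑ j, (m j : ℚ) • coroot j) (hμ' : lam - μ' = ∑ j, (n j : ℚ) • coroot j)
    (hdom : IsDominant pairing μ) (hmn : m ≤ n) {i : Fin r} (hi : m i = n i) :
    0 ≤ pairing i μ' := by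
  have hμ'_eq : μ' = μ - ∑ j, ((n j : ℚ) - m j) • coroot j := by
    rw [← sub_eq_sum_sub_smul_of_sub_eq_sum coroot hμ hμ', sub_sub_cancel]
  rw [hμ'_eq]
  refine apply_sub_sum_smul_nonneg coroot _ (fun j hji => hoff i j hji.symm) (hdom i)
    (fun j => sub_nonneg.mpr (by exact_mod_cast hmn j)) (by simp [hi])

lemma isDominant_of_sub_eq_sum_sup (pairing : Fin r → V →ₗ[ℚ] ℚ)
    (hoff : ∀ i j, i ≠ j → pairing i (coroot j) ≤ 0) {lam μ₁ μ₂ μ₃ : V} {n₁ n₂ : Fin r → ℕ}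
    (hμ₁dom : IsDominant pairing μ₁) (hμ₂dom : IsDominant pairing μ₂)
    (hn₁ : lam - μ₁ = ∑ i, (n₁ i : ℚ) • coroot i) (hn₂ : lam - μ₂ = ∑ i, (n₂ i : ℚ) • coroot i)
    (hμ₃ : lam - μ₃ = ∑ i, ((n₁ ⊔ n₂) i : ℚ) • coroot i) :
    IsDominant pairing μ₃ := fun i => by
  rcases max_choice (n₁ i) (n₂ i) with h | h
  · exact pairing_nonneg_of_coeff_eq coroot pairing hoff hn₁ hμ₃ hμ₁dom le_sup_left h.symm
  · exact pairing_nonneg_of_coeff_eq coroot pairing hoff hn₂ hμ₃ hμ₂dom le_sup_right h.symm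

end

theorem steinberg_strata_intersection_general
    {V : Type*} [AddCommGroup V] [Module ℚ V] {r : ℕ}
    (coroot : Fin r → V) (pairing : Fin r → V →ₗ[ℚ] ℚ) (Λ : AddSubgroup V)
    (hoff : ∀ i j, i ≠ j → pairing i (coroot j) ≤ 0)
    (hΛcoroot : ∀ i, coroot i ∈ Λ)
    (lam μ₁ μ₂ : V) (hlamΛ : lam ∈ Λ)
    (hμ₁dom : IsDominant pairing μ₁) (hμ₂dom : IsDominant pairing μ₂)
    (n₁ : Fin r → ℕ) (hn₁ : lam - μ₁ = ∑ i, (n₁ i : ℚ) • coroot i)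
    (n₂ : Fin r → ℕ) (hn₂ : lam - μ₂ = ∑ i, (n₂ i : ℚ) • coroot i) :
    ∃ μ₃ : V, μ₃ ∈ Λ ∧ IsDominant pairing μ₃ ∧ leZ coroot μ₃ μ₁ ∧ leZ coroot μ₃ μ₂ ∧
      ∃ n₃ : Fin r → ℕ, lam - μ₃ = ∑ i, (n₃ i : ℚ) • coroot i ∧
        ∀ a : Fin r → ℕ,
          ((∀ i, n₁ i ≤ a i ∧ n₂ i ≤ a i) ↔ (∀ i, n₃ i ≤ a i)) := by
  have hμ₃ : lam - (lam - ∑ i, ((n₁ ⊔ n₂) i : ℚ) • coroot i) =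
      ∑ i, ((n₁ ⊔ n₂) i : ℚ) • coroot i := sub_sub_cancel _ _
  refine ⟨_, Λ.sub_mem hlamΛ (natCast_sum_smul_mem coroot hΛcoroot _),
    isDominant_of_sub_eq_sum_sup coroot pairing hoff hμ₁dom hμ₂dom hn₁ hn₂ hμ₃,
    leZ_of_sub_eq_sum coroot hn₁ hμ₃ le_sup_left, leZ_of_sub_eq_sum coroot hn₂ hμ₃ le_sup_right,
    n₁ ⊔ n₂, hμ₃, fun a => forall_congr' fun i => sup_le_iff.symm⟩

/-- Proposition 3.22 (coordinate form): let `lam, μ₁, μ₂ ∈ Λ⁺` with `μ₁ ≤ lam` and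
`μ₂ ≤ lam`, say `lam - μ₁ = ∑ n₁ᵢ • αᵢ^∨` and `lam - μ₂ = ∑ n₂ᵢ • αᵢ^∨`.  Then there is
`μ₃ ∈ Λ⁺` with `μ₃ ≤ μ₁`, `μ₃ ≤ μ₂`, `lam - μ₃ = ∑ n₃ᵢ • αᵢ^∨`, such that for every
tuple `a : Fin r → ℕ`:  (`∀ i, aᵢ ≥ n₁ᵢ ∧ aᵢ ≥ n₂ᵢ`) ↔ (`∀ i, aᵢ ≥ n₃ᵢ`).  This expresses
`i_{μ₁ lam}(𝔠₊^{μ₁}) ∩ i_{μ₂ lam}(𝔠₊^{μ₂}) = i_{μ₃ lam}(𝔠₊^{μ₃})` inside `𝔠₊(𝒪)`, where a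
point lies in `i_{μ lam}(𝔠₊^{μ})` iff the valuations `aᵢ` of its coordinates satisfy
`aᵢ ≥ ⟨ωᵢ, lam - μ⟩`. -/
theorem steinberg_strata_intersection
    {V : Type*} [AddCommGroup V] [Module ℚ V] {r : ℕ}
    (coroot : Fin r → V) (pairing : Fin r → V →ₗ[ℚ] ℚ) (Λ : AddSubgroup V)
    (hli : LinearIndependent ℚ coroot)
    (hdiag : ∀ i, pairing i (coroot i) = 2)
    (hoff : ∀ i j, i ≠ j → pairing i (coroot j) ≤ 0)
    (hΛcoroot : ∀ i, coroot i ∈ Λ)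
    (hΛint : ∀ μ ∈ Λ, ∀ i, ∃ n : ℤ, pairing i μ = (n : ℚ))
    (lam μ₁ μ₂ : V) (hlamΛ : lam ∈ Λ) (hμ₁Λ : μ₁ ∈ Λ) (hμ₂Λ : μ₂ ∈ Λ)
    (hlamdom : IsDominant pairing lam)
    (hμ₁dom : IsDominant pairing μ₁) (hμ₂dom : IsDominant pairing μ₂)
    (n₁ : Fin r → ℕ) (hn₁ : lam - μ₁ = ∑ i, (n₁ i : ℚ) • coroot i)
    (n₂ : Fin r → ℕ) (hn₂ : lam - μ₂ = ∑ i, (n₂ i : ℚ) • coroot i) :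
    ∃ μ₃ : V, μ₃ ∈ Λ ∧ IsDominant pairing μ₃ ∧ leZ coroot μ₃ μ₁ ∧ leZ coroot μ₃ μ₂ ∧
      ∃ n₃ : Fin r → ℕ, lam - μ₃ = ∑ i, (n₃ i : ℚ) • coroot i ∧
        ∀ a : Fin r → ℕ,
          ((∀ i, n₁ i ≤ a i ∧ n₂ i ≤ a i) ↔ (∀ i, n₃ i ≤ a i)) :=
  steinberg_strata_intersection_general coroot pairing Λ hoff hΛcoroot lam μ₁ μ₂ hlamΛ hμ₁dom hμ₂dom
    n₁ hn₁ n₂ hn₂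
end

section
/- Let λ ∈ Λ⁺ be a dominant integral coweight and ν ∈ Λ_ℚ⁺ a dominant rational coweight with ν ≤_ℚ λ. Then there exists a unique μ ∈ Λ⁺ such that: ν ≤_ℚ μ, μ ≤ λ, and μ ≤ μ′ for every μ′ ∈ Λ⁺ satisfying ν ≤_ℚ μ′ and μ′ ≤ λ. In other words, there is a unique smallest dominant integral coweight μ with ν ≤_ℚ μ and μ ≤ λ (the 'best integral approximation' of ν, the paper's Lemma 3.24). -/
lemma SupClosed.isGreatest_csSup {α : Type*} [ConditionallyCompleteLattice α]
    [LocallyFiniteOrderBot α] {s : Set α} (hs : SupClosed s) (hne : s.Nonempty)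
    (hbdd : BddAbove s) : IsGreatest s (sSup s) :=
  ⟨hs.sSup_mem_of_nonempty hbdd.finite hne subset_rfl, fun _ ha => le_csSup hbdd ha⟩

section CorootCombinations

variable {V : Type*} [AddCommGroup V] [Module ℚ V] {r : ℕ} {coroot : Fin r → V}

lemma leZ_antisymm (hli : LinearIndependent ℚ coroot) {μ lam : V}
    (h₁ : leZ coroot μ lam) (h₂ : leZ coroot lam μ) : μ = lam := by
  obtain ⟨a, ha⟩ := h₁
  obtain ⟨b, hb⟩ := h₂
  have hsum : ∑ i, ((a i : ℚ) + b i) • coroot i = ∑ i, (0 : ℚ) • coroot i := by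
    simp only [add_smul, Finset.sum_add_distrib, ← ha, ← hb, zero_smul, Finset.sum_const_zero]
    abel
  have ha0 : ∀ i, a i = 0 := fun i => by
    have := Fintype.linearIndependent_iffₛ.mp hli _ _ hsum i
    exact_mod_cast (add_eq_zero_iff_of_nonneg (Nat.cast_nonneg _) (Nat.cast_nonneg _)).1 this |>.1
  rw [eq_comm, ← sub_eq_zero, ha]
  simp [ha0]

lemma leZ_sub_sum_of_le (lam : V) {c c' : Fin r → ℕ} (h : c' ≤ c) :
    leZ coroot (lam - ∑ i, (c i : ℚ) • coroot i) (lam - ∑ i, (c' i : ℚ) • coroot i) :=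
  ⟨c - c', by simp [Nat.cast_sub (h _), sub_smul, Finset.sum_sub_distrib]⟩

lemma leQ_sub_sum_iff (hli : LinearIndependent ℚ coroot) {lam ν : V} {f : Fin r → ℚ}
    (hf : lam - ν = ∑ i, f i • coroot i) (c : Fin r → ℚ) :
    leQ coroot ν (lam - ∑ i, c i • coroot i) ↔ c ≤ f := by
  have hdiff : lam - ∑ i, c i • coroot i - ν = ∑ i, (f - c) i • coroot i := by
    simp only [Pi.sub_apply, sub_smul, Finset.sum_sub_distrib, ← hf]
    abel
  simp only [leQ, Dcone, Set.mem_ofPred_eq, hdiff]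
  constructor
  · rintro ⟨e, he, hfe⟩ i
    have := Fintype.linearIndependent_iffₛ.mp hli _ _ hfe i
    simp only [Pi.sub_apply] at this
    linarith [he i]
  · exact fun h => ⟨f - c, fun i => sub_nonneg.2 (h i), rfl⟩

lemma sub_sum_natCast_smul_mem {Λ : AddSubgroup V} (hΛcoroot : ∀ i, coroot i ∈ Λ) {lam : V}
    (hlam : lam ∈ Λ) (c : Fin r → ℕ) : lam - ∑ i, (c i : ℚ) • coroot i ∈ Λ :=
  sub_mem hlam (sum_mem fun i _ => by
    rw [Nat.cast_smul_eq_nsmul]; exact nsmul_mem (hΛcoroot i) _)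

variable {pairing : Fin r → V →ₗ[ℚ] ℚ}

lemma isDominant_sub_sum_sup (hoff : ∀ i j, i ≠ j → pairing i (coroot j) ≤ 0) {lam : V}
    {a b : Fin r → ℚ} (ha : IsDominant pairing (lam - ∑ i, a i • coroot i))
    (hb : IsDominant pairing (lam - ∑ i, b i • coroot i)) :
    IsDominant pairing (lam - ∑ i, (a ⊔ b) i • coroot i) := by
  intro k
  wlog hk : b k ≤ a k generalizing a b
  · rw [sup_comm]
    exact this hb ha (le_of_not_ge hk)
  have hsum : ∑ i, (a ⊔ b) i * pairing k (coroot i) ≤ ∑ i, a i * pairing k (coroot i) :=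
    Finset.sum_le_sum fun i _ => by
      rcases eq_or_ne i k with rfl | hik
      · simp [sup_eq_left.2 hk]
      · exact mul_le_mul_of_nonpos_right le_sup_left (hoff k i hik.symm)
  have hak := ha k
  simp only [map_sub, map_sum, map_smul, smul_eq_mul] at hak ⊢
  linarith

variable (coroot pairing) in
def admissibleCoeffs (lam ν : V) : Set (Fin r → ℕ) :=
  {c | IsDominant pairing (lam - ∑ i, (c i : ℚ) • coroot i) ∧
    leQ coroot ν (lam - ∑ i, (c i : ℚ) • coroot i)}

variable {lam ν : V}

lemma zero_mem_admissibleCoeffs (hlam : IsDominant pairing lam) (hν : leQ coroot ν lam) :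
    0 ∈ admissibleCoeffs coroot pairing lam ν := by
  simpa [admissibleCoeffs] using ⟨hlam, hν⟩

lemma supClosed_admissibleCoeffs (hli : LinearIndependent ℚ coroot)
    (hoff : ∀ i j, i ≠ j → pairing i (coroot j) ≤ 0) (hν : leQ coroot ν lam) :
    SupClosed (admissibleCoeffs coroot pairing lam ν) := by
  obtain ⟨f, -, hf⟩ := hν
  rintro c ⟨hcdom, hcν⟩ c' ⟨hc'dom, hc'ν⟩
  have hcast : ∀ i, (((c ⊔ c') i : ℕ) : ℚ) = ((fun i => (c i : ℚ)) ⊔ fun i => (c' i : ℚ)) i :=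
    fun i => Nat.cast_max _ _
  simp only [admissibleCoeffs, Set.mem_ofPred_eq, hcast]
  exact ⟨isDominant_sub_sum_sup hoff hcdom hc'dom, (leQ_sub_sum_iff hli hf _).2 <|
    sup_le ((leQ_sub_sum_iff hli hf _).1 hcν) ((leQ_sub_sum_iff hli hf _).1 hc'ν)⟩

lemma bddAbove_admissibleCoeffs (hli : LinearIndependent ℚ coroot) (hν : leQ coroot ν lam) :
    BddAbove (admissibleCoeffs coroot pairing lam ν) := by
  obtain ⟨f, -, hf⟩ := hν
  exact ⟨fun i => ⌊f i⌋₊, fun c hc i => Nat.le_floor ((leQ_sub_sum_iff hli hf _).1 hc.2 i)⟩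

end CorootCombinations

theorem best_integral_approximation_general
    {V : Type*} [AddCommGroup V] [Module ℚ V] {r : ℕ}
    (coroot : Fin r → V) (pairing : Fin r → V →ₗ[ℚ] ℚ) (Λ : AddSubgroup V)
    (hli : LinearIndependent ℚ coroot)
    (hoff : ∀ i j, i ≠ j → pairing i (coroot j) ≤ 0)
    (hΛcoroot : ∀ i, coroot i ∈ Λ)
    (lam : V) (hlamΛ : lam ∈ Λ) (hlamdom : IsDominant pairing lam)
    (ν : V) (hν : leQ coroot ν lam) :
    ∃! μ : V, μ ∈ Λ ∧ IsDominant pairing μ ∧ leQ coroot ν μ ∧ leZ coroot μ lam ∧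
      ∀ μ' : V, μ' ∈ Λ → IsDominant pairing μ' → leQ coroot ν μ' → leZ coroot μ' lam →
        leZ coroot μ μ' := by
  obtain ⟨⟨hdom, hνμ⟩, hmax⟩ := (supClosed_admissibleCoeffs hli hoff hν).isGreatest_csSup
    ⟨0, zero_mem_admissibleCoeffs hlamdom hν⟩ (bddAbove_admissibleCoeffs hli hν)
  set cmax := sSup (admissibleCoeffs coroot pairing lam ν)
  have hmemΛ := sub_sum_natCast_smul_mem hΛcoroot hlamΛ cmax
  have hleast : ∀ μ' : V, IsDominant pairing μ' → leQ coroot ν μ' → leZ coroot μ' lam →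
      leZ coroot (lam - ∑ i, (cmax i : ℚ) • coroot i) μ' := by
    rintro μ' hdom' hνμ' ⟨c, hc⟩
    rw [← sub_sub_cancel lam μ', hc] at hdom' hνμ' ⊢
    exact leZ_sub_sum_of_le lam (hmax ⟨hdom', hνμ'⟩)
  refine ⟨_, ⟨hmemΛ, hdom, hνμ, ⟨cmax, sub_sub_cancel _ _⟩, fun μ' _ => hleast μ'⟩, ?_⟩
  rintro μ' ⟨-, hdom', hνμ', hμ'lam, hleast'⟩
  exact leZ_antisymm hli (hleast' _ hmemΛ hdom hνμ ⟨cmax, sub_sub_cancel _ _⟩)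
    (hleast μ' hdom' hνμ' hμ'lam)

/-- Lemma 3.24 ("best integral approximation"): given a dominant integral coweight
`lam ∈ Λ⁺` and a dominant rational coweight `ν` with `ν ≤_ℚ lam`, there is a unique
smallest dominant integral coweight `μ ∈ Λ⁺` with `ν ≤_ℚ μ` and `μ ≤ lam`. -/
theorem best_integral_approximation
    {V : Type*} [AddCommGroup V] [Module ℚ V] {r : ℕ}
    (coroot : Fin r → V) (pairing : Fin r → V →ₗ[ℚ] ℚ) (Λ : AddSubgroup V)
    (hli : LinearIndependent ℚ coroot)
    (hdiag : ∀ i, pairing i (coroot i) = 2)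
    (hoff : ∀ i j, i ≠ j → pairing i (coroot j) ≤ 0)
    (hΛcoroot : ∀ i, coroot i ∈ Λ)
    (hΛint : ∀ μ ∈ Λ, ∀ i, ∃ n : ℤ, pairing i μ = (n : ℚ))
    (hfund : ∃ fcw : Fin r → V,
      (∀ i j, pairing i (fcw j) = if i = j then 1 else 0) ∧ ∀ j, fcw j ∈ Dcone coroot)
    (lam : V) (hlamΛ : lam ∈ Λ) (hlamdom : IsDominant pairing lam)
    (ν : V) (hνdom : IsDominant pairing ν) (hν : leQ coroot ν lam) :
    ∃! μ : V, μ ∈ Λ ∧ IsDominant pairing μ ∧ leQ coroot ν μ ∧ leZ coroot μ lam ∧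
      ∀ μ' : V, μ' ∈ Λ → IsDominant pairing μ' → leQ coroot ν μ' → leZ coroot μ' lam →
        leZ coroot μ μ' :=
  best_integral_approximation_general coroot pairing Λ hli hoff hΛcoroot lam hlamΛ hlamdom ν hν
end

section
/- Let γ̄ : M → Kˣ be a group homomorphism (a point of the split torus with character lattice M over K) such that γ̄(α) ≠ 1 for all α ∈ Φ and v(γ̄(α)) ≥ 0 for all α ∈ Φ⁺. Then the discriminant valuation d = Σ_{α∈Φ} v(γ̄(α) − 1) satisfies d = 2·Σ_{α∈Φ⁺} v(γ̄(α) − 1) − Σ_{α∈Φ⁺} v(γ̄(α)); in the paper's notation, d(γ) = 2 Σ_{α∈Φ⁺} val(α(γ̄) − 1) − ⟨2ρ, ν_γ⟩, where the Newton point ν_γ pairs with a character χ by ⟨χ, ν_γ⟩ = v(γ̄(χ)) and 2ρ = Σ_{α∈Φ⁺} α. (The paper's Lemma 3.2 computing the discriminant valuation in terms of the Newton point.) -/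
/-!
For `x = γ(α)` one has `x⁻¹ − 1 = −x⁻¹ (x − 1)`, so in the sum over `Φ = Φ⁺ ⊔ (−Φ⁺)`
the negative root `−α` contributes `v(γ(α) − 1) − v(γ(α))`.
-/

section MulValuation

variable {K : Type*} [DivisionRing K] (v : K → ℚ)
  (hv_mul : ∀ a b : K, a ≠ 0 → b ≠ 0 → v (a * b) = v a + v b)
include hv_mul

theorem val_one_of_map_mul : v 1 = 0 := by
  have h := hv_mul 1 1 one_ne_zero one_ne_zero
  rw [mul_one] at h
  linarith

theorem val_inv_of_map_mul {a : K} (ha : a ≠ 0) : v a⁻¹ = -v a := by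
  have h := hv_mul a a⁻¹ ha (inv_ne_zero ha)
  rw [mul_inv_cancel₀ ha, val_one_of_map_mul v hv_mul] at h
  linarith

theorem val_neg_of_map_mul {a : K} (ha : a ≠ 0) : v (-a) = v a := by
  have h := hv_mul (-1) (-1) (neg_ne_zero.mpr one_ne_zero) (neg_ne_zero.mpr one_ne_zero)
  rw [neg_one_mul, neg_neg, val_one_of_map_mul v hv_mul] at h
  rw [← neg_one_mul, hv_mul _ _ (neg_ne_zero.mpr one_ne_zero) ha]
  linarith

theorem val_inv_sub_one_of_map_mul {x : K} (hx₀ : x ≠ 0) (hx₁ : x ≠ 1) :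
    v (x⁻¹ - 1) = v (x - 1) - v x := by
  have hsub : x - 1 ≠ 0 := sub_ne_zero.mpr hx₁
  have hfactor : x⁻¹ - 1 = x⁻¹ * -(x - 1) := by
    rw [mul_neg, mul_sub, inv_mul_cancel₀ hx₀, mul_one, neg_sub]
  rw [hfactor, hv_mul _ _ (inv_ne_zero hx₀) (neg_ne_zero.mpr hsub),
    val_inv_of_map_mul v hv_mul hx₀, val_neg_of_map_mul v hv_mul hsub]
  ring

end MulValuation

theorem map_neg_eq_inv_of_map_add {M K : Type*} [AddGroup M] [GroupWithZero K]
    (γ : M → K) (hγ_ne : ∀ m, γ m ≠ 0) (hγ_mul : ∀ m n, γ (m + n) = γ m * γ n) (α : M) :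
    γ (-α) = (γ α)⁻¹ := by
  have hγ0 : γ 0 = 1 := by
    have h := hγ_mul 0 0
    rw [add_zero] at h
    exact (mul_eq_left₀ (hγ_ne 0)).mp h.symm
  exact eq_inv_of_mul_eq_one_right (by rw [← hγ_mul, add_neg_cancel, hγ0])

theorem Finset.sum_union_image_neg {M R : Type*} [AddGroup M] [DecidableEq M]
    [AddCommMonoid R] (s : Finset M) (hdisj : Disjoint s (s.image (fun α => -α)))
    (f : M → R) :
    ∑ α ∈ s ∪ s.image (fun α => -α), f α = ∑ α ∈ s, (f α + f (-α)) := by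
  rw [Finset.sum_union hdisj, Finset.sum_image (fun a _ b _ h => neg_injective h),
    Finset.sum_add_distrib]

theorem discriminant_valuation_via_newton_point_general
    {K : Type*} [Field K] (v : K → ℚ)
    (hv_mul : ∀ a b : K, a ≠ 0 → b ≠ 0 → v (a * b) = v a + v b)
    {M : Type*} [AddCommGroup M] [DecidableEq M]
    (γ : M → K) (hγ_ne : ∀ m, γ m ≠ 0) (hγ_mul : ∀ m n, γ (m + n) = γ m * γ n)
    (Φpos Φ : Finset M)
    (hΦ : Φ = Φpos ∪ Φpos.image (fun α => -α))
    (hdisj : Disjoint Φpos (Φpos.image (fun α => -α)))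
    (hreg : ∀ α ∈ Φ, γ α ≠ 1) :
    ∑ α ∈ Φ, v (γ α - 1)
      = 2 * (∑ α ∈ Φpos, v (γ α - 1)) - ∑ α ∈ Φpos, v (γ α) := by
  have hneg_root : ∀ α ∈ Φpos, v (γ (-α) - 1) = v (γ α - 1) - v (γ α) := fun α hα => by
    rw [map_neg_eq_inv_of_map_add γ hγ_ne hγ_mul]
    exact val_inv_sub_one_of_map_mul v hv_mul (hγ_ne α)
      (hreg α (hΦ ▸ Finset.mem_union_left _ hα))
  rw [hΦ, Finset.sum_union_image_neg Φpos hdisj, Finset.sum_congr rfl fun α hα => by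
    rw [hneg_root α hα], Finset.sum_add_distrib, Finset.sum_sub_distrib]
  ring

/-- Lemma 3.2: if `γ(α) ≠ 1` for all roots `α` and `v(γ(α)) ≥ 0` for all positive roots
`α`, then the discriminant valuation `d = ∑_{α ∈ Φ} v(γ(α) − 1)` equals
`2 ∑_{α ∈ Φ⁺} v(γ(α) − 1) − ∑_{α ∈ Φ⁺} v(γ(α))`; in the paper's notation,
`d(γ) = 2 ∑_{α ∈ Φ⁺} val(α(γ̄) − 1) − ⟨2ρ, ν_γ⟩`, where `⟨χ, ν_γ⟩ = v(γ̄(χ))` and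
`2ρ = ∑_{α ∈ Φ⁺} α`. -/
theorem discriminant_valuation_via_newton_point
    {K : Type*} [Field K] (v : K → ℚ)
    (hv_mul : ∀ a b : K, a ≠ 0 → b ≠ 0 → v (a * b) = v a + v b)
    (hv_add : ∀ a b : K, a ≠ 0 → b ≠ 0 → a + b ≠ 0 → min (v a) (v b) ≤ v (a + b))
    {M : Type*} [AddCommGroup M] [DecidableEq M] [Module.Free ℤ M] [Module.Finite ℤ M]
    (γ : M → K) (hγ_ne : ∀ m, γ m ≠ 0) (hγ_mul : ∀ m n, γ (m + n) = γ m * γ n)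
    (Φpos Φ : Finset M)
    (hΦ : Φ = Φpos ∪ Φpos.image (fun α => -α))
    (hdisj : Disjoint Φpos (Φpos.image (fun α => -α)))
    (hreg : ∀ α ∈ Φ, γ α ≠ 1)
    (hpos : ∀ α ∈ Φpos, 0 ≤ v (γ α)) :
    ∑ α ∈ Φ, v (γ α - 1)
      = 2 * (∑ α ∈ Φpos, v (γ α - 1)) - ∑ α ∈ Φpos, v (γ α) :=
  discriminant_valuation_via_newton_point_general v hv_mul γ hγ_ne hγ_mul Φpos Φ hΦ hdisj hreg
end

section
/- Let 𝔱 be a finite-dimensional k-vector space and w ∈ GL(𝔱) with wᵉ = 1 which preserves a nondegenerate symmetric bilinear form B on 𝔱 (B(wx, wy) = B(x, y)). Define the k-linear automorphism σ of 𝔱 ⊗_k k[[u]] by σ(x ⊗ f(u)) = w(x) ⊗ f(ζu), and let M := (𝔱 ⊗_k k[[u]])^σ be the σ-fixed submodule (a k[[uᵉ]]-submodule). Then 2·dim_k((𝔱 ⊗_k k[[u]]) / (k[[u]]·M)) = e·(dim_k 𝔱 − dim_k 𝔱^w), where k[[u]]·M is the k[[u]]-submodule generated by M and 𝔱^w is the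 fixed subspace of w. Explicitly, M = ⊕_{i=0}^{e−1} 𝔱(i) ⊗ u^{(e−i) mod e}·k[[uᵉ]] where 𝔱(i) = ker(w − ζⁱ), and B forces dim 𝔱(i) = dim 𝔱(e−i). (The key linear-algebra computation in the paper's proof of Theorem 3.17 computing dim P_a for ramified γ; note the paper's displayed value e·(dim 𝔱 − dim 𝔱^w) for the quotient contains a factor-2 slip, and the value stated here is the one consistent with the proof and with the final dimension formula dim P_a = ⟨ρ,λ⟩ + (d(γ) − c(γ))/2.) -/
open scoped TensorProduct

/-- The `k`-linear substitution map `f(u) ↦ f(ζ·u)` on formal power series. -/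
noncomputable def rescaleL (k : Type*) [CommRing k] (ζ : k) :
    PowerSeries k →ₗ[k] PowerSeries k where
  toFun := PowerSeries.rescale ζ
  map_add' f g := map_add _ f g
  map_smul' c f := by
    ext n
    simp [PowerSeries.coeff_rescale, mul_left_comm]

/-- The twisted Galois action `σ(f(u) ⊗ x) = f(ζu) ⊗ w(x)` on `k[[u]] ⊗ₖ 𝔱`. -/
noncomputable def twistedSigma (k : Type*) [CommRing k] (ζ : k)
    {t : Type*} [AddCommGroup t] [Module k t] (w : t →ₗ[k] t) :
    PowerSeries k ⊗[k] t →ₗ[k] PowerSeries k ⊗[k] t :=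
  TensorProduct.map (rescaleL k ζ) w

/-!
Since `w ^ e = 1` and `ζ` is a primitive `e`-th root of unity, `X ^ e - 1` is a product of distinct
linear factors `X - ζ ^ i`, so `𝔱 = ⨁ 𝔱(i)` with `𝔱(i) = ker (w - ζ ^ i)`. In a `k[[u]]`-basis of
`k[[u]] ⊗ 𝔱` adapted to this decomposition, `σ` acts on a coordinate `f` belonging to `𝔱(i)` by
`f ↦ ζ ^ i f(ζu)`, so `σ` fixes exactly the coordinates supported in degrees `≡ -i (mod e)` and
the fixed vectors span `⨁ u ^ j(i) k[[u]] ⊗ 𝔱(i)` with `j(i) = (-i) mod e`. Hence the quotient has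
dimension `∑ j(i) dim 𝔱(i)`. A nondegenerate `w`-invariant form pairs `𝔱(i)` perfectly with
`𝔱(-i)`, so `dim 𝔱(i) = dim 𝔱(-i)`, and pairing the terms `i` and `-i` uses `j(i) + j(-i) = e` for
`i ≠ 0`.
-/

open Module

theorem Fin.dvd_val_add_val_neg {e : ℕ} [NeZero e] (c : Fin e) :
    e ∣ (c : ℕ) + ((-c : Fin e) : ℕ) := by
  rw [Fin.val_neg]
  split_ifs with h
  · simp [h]
  · exact ⟨1, by omega⟩

theorem Fin.not_dvd_val_add_of_lt_val_neg {e : ℕ} [NeZero e] (c : Fin e) {m : ℕ}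
    (hm : m < ((-c : Fin e) : ℕ)) : ¬ e ∣ (c : ℕ) + m := by
  rw [Fin.val_neg] at hm
  split_ifs at hm with h
  · omega
  · have := Fin.val_ne_zero_iff.mpr h
    exact Nat.not_dvd_of_pos_of_lt (by omega) (by omega)

theorem IsPrimitiveRoot.pow_val_neg {K : Type*} [Field K] {e : ℕ} [NeZero e] {ζ : K}
    (hζ : IsPrimitiveRoot ζ e) (i : Fin e) : ζ ^ ((-i : Fin e) : ℕ) = (ζ ^ (i : ℕ))⁻¹ := by
  refine eq_inv_of_mul_eq_one_left ?_
  rw [← pow_add, add_comm]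
  exact (hζ.pow_eq_one_iff_dvd _).mpr i.dvd_val_add_val_neg

theorem Fin.two_mul_sum_mul_val_neg {e : ℕ} [NeZero e] (d : Fin e → ℕ) (hd : ∀ i, d (-i) = d i) :
    2 * ∑ i, d i * ((-i : Fin e) : ℕ) = e * (∑ i, d i - d 0) := by
  have hswap : ∑ i, d i * ((-i : Fin e) : ℕ) = ∑ i, d i * (i : ℕ) :=
    Fintype.sum_equiv (Equiv.neg _) _ _ fun i => by rw [Equiv.neg_apply, hd]
  have hpair : ∀ i : Fin e, (i : ℕ) + ((-i : Fin e) : ℕ) = if i = 0 then 0 else e := fun i => by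
    rw [Fin.val_neg]
    split_ifs with h
    · simp [h]
    · have := i.isLt
      omega
  calc 2 * ∑ i, d i * ((-i : Fin e) : ℕ)
      = ∑ i, d i * (i : ℕ) + ∑ i, d i * ((-i : Fin e) : ℕ) := by rw [two_mul, hswap]
    _ = ∑ i, d i * (if i = 0 then 0 else e) := by
      rw [← Finset.sum_add_distrib]
      exact Finset.sum_congr rfl fun i _ => by rw [← mul_add, hpair]
    _ = e * (∑ i, d i - d 0) := by
      rw [← Finset.add_sum_erase _ _ (Finset.mem_univ 0),
        ← Finset.add_sum_erase _ d (Finset.mem_univ 0), if_pos rfl, mul_zero, zero_add,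
        Nat.add_sub_cancel_left, Finset.mul_sum]
      exact Finset.sum_congr rfl fun i hi => by rw [if_neg (Finset.ne_of_mem_erase hi), mul_comm]

namespace Module.End

variable {K V : Type*} [Field K] [AddCommGroup V] [Module K V]

open Polynomial in
theorem iSup_eigenspace_eq_ker_aeval_prod (f : End K V) (s : Finset K) :
    ⨆ μ ∈ s, f.eigenspace μ = LinearMap.ker (aeval f (∏ μ ∈ s, (X - C μ))) := by
  classical
  induction s using Finset.induction_on with
  | empty =>
    simp only [Finset.notMem_empty, iSup_false, iSup_bot, Finset.prod_empty, map_one]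
    exact LinearMap.ker_id.symm
  | insert a s ha ih =>
    have hcop : IsCoprime (X - C a) (∏ μ ∈ s, (X - C μ)) :=
      IsCoprime.prod_right fun μ hμ =>
        isCoprime_X_sub_C_of_isUnit_sub (sub_ne_zero.mpr (ne_of_mem_of_not_mem hμ ha).symm).isUnit
    rw [Finset.iSup_insert, ih, Finset.prod_insert ha,
      ← sup_ker_aeval_eq_ker_aeval_mul_of_coprime f hcop, eigenspace_def]
    simp [Algebra.algebraMap_eq_smul_one]

theorem iSup_eigenspace_pow_eq_top {e : ℕ} [NeZero e] {ζ : K} (hζ : IsPrimitiveRoot ζ e)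
    {f : End K V} (hf : f ^ e = 1) : ⨆ i : Fin e, f.eigenspace (ζ ^ (i : ℕ)) = ⊤ := by
  have h := f.iSup_eigenspace_eq_ker_aeval_prod (Polynomial.nthRootsFinset e (1 : K))
  rw [← Polynomial.X_pow_sub_one_eq_prod (NeZero.pos e) hζ] at h
  simp only [map_sub, map_pow, Polynomial.aeval_X, map_one, hf, sub_self, LinearMap.ker_zero] at h
  rw [eq_top_iff, ← h]
  refine iSup₂_le fun μ hμ => ?_
  obtain ⟨i, hi, rfl⟩ :=
    hζ.eq_pow_of_pow_eq_one ((Polynomial.mem_nthRootsFinset (NeZero.pos e) _).mp hμ)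
  exact le_iSup (fun i : Fin e => f.eigenspace (ζ ^ (i : ℕ))) ⟨i, hi⟩

theorem isInternal_eigenspace_pow {e : ℕ} [NeZero e] {ζ : K} (hζ : IsPrimitiveRoot ζ e)
    {f : End K V} (hf : f ^ e = 1) :
    DirectSum.IsInternal fun i : Fin e => f.eigenspace (ζ ^ (i : ℕ)) :=
  DirectSum.isInternal_submodule_of_iSupIndep_of_iSup_eq_top
    ((eigenspaces_iSupIndep f).comp fun i j h => Fin.ext (hζ.pow_inj i.isLt j.isLt h))
    (iSup_eigenspace_pow_eq_top hζ hf)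

section InvariantForm

variable {w : End K V} {B : V →ₗ[K] V →ₗ[K] K}

theorem apply_eq_zero_of_mem_eigenspace (hBinv : ∀ x y, B (w x) (w y) = B x y) {μ ν : K}
    (hμν : μ * ν ≠ 1) {x y : V} (hx : x ∈ w.eigenspace μ) (hy : y ∈ w.eigenspace ν) :
    B x y = 0 := by
  have h := hBinv x y
  rw [mem_eigenspace_iff.mp hx, mem_eigenspace_iff.mp hy] at h
  simp only [map_smul, LinearMap.smul_apply, smul_eq_mul] at h
  have h' : (μ * ν - 1) * B x y = 0 := by linear_combination h
  exact (mul_eq_zero.mp h').resolve_left (sub_ne_zero.mpr hμν)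

variable [FiniteDimensional K V]

theorem finrank_eigenspace_le_finrank_eigenspace_inv (hdiag : ⨆ ν, w.eigenspace ν = ⊤)
    (hBnondeg : ∀ x, (∀ y, B x y = 0) → x = 0) (hBinv : ∀ x y, B (w x) (w y) = B x y) (μ : K) :
    finrank K (w.eigenspace μ) ≤ finrank K (w.eigenspace μ⁻¹) := by
  let L : w.eigenspace μ →ₗ[K] Dual K (w.eigenspace μ⁻¹) :=
    B.compl₁₂ (Submodule.subtype _) (Submodule.subtype _)
  refine (LinearMap.finrank_le_finrank_of_injective (f := L) ?_).trans Subspace.dual_finrank_eq.le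
  rw [← LinearMap.ker_eq_bot, Submodule.eq_bot_iff]
  intro x hx
  have hker : ⊤ ≤ LinearMap.ker (B x) := by
    refine hdiag ▸ iSup_le fun ν y hy => ?_
    by_cases hν : ν = μ⁻¹
    · subst hν
      exact LinearMap.congr_fun (LinearMap.mem_ker.mp hx) ⟨y, hy⟩
    · exact apply_eq_zero_of_mem_eigenspace hBinv
        (fun h => hν (eq_inv_of_mul_eq_one_right h)) x.2 hy
  exact Subtype.ext (hBnondeg x fun y => hker Submodule.mem_top)

theorem finrank_eigenspace_inv (hdiag : ⨆ ν, w.eigenspace ν = ⊤)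
    (hBnondeg : ∀ x, (∀ y, B x y = 0) → x = 0) (hBinv : ∀ x y, B (w x) (w y) = B x y) (μ : K) :
    finrank K (w.eigenspace μ⁻¹) = finrank K (w.eigenspace μ) := by
  have h := finrank_eigenspace_le_finrank_eigenspace_inv hdiag hBnondeg hBinv μ⁻¹
  rw [inv_inv] at h
  exact le_antisymm h (finrank_eigenspace_le_finrank_eigenspace_inv hdiag hBnondeg hBinv μ)

end InvariantForm

end Module.End

namespace PowerSeries

variable {k : Type*} [Field k]

theorem pow_smul_rescale_eq_self_iff (ζ : k) (c : ℕ) (f : PowerSeries k) :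
    ζ ^ c • rescale ζ f = f ↔ ∀ m, coeff m f ≠ 0 → ζ ^ (c + m) = 1 := by
  rw [PowerSeries.ext_iff]
  refine forall_congr' fun m => ?_
  rw [map_smul, coeff_rescale, smul_eq_mul, ← mul_assoc, ← pow_add]
  by_cases ha : coeff m f = 0 <;> simp [ha, mul_eq_right₀]

variable {M : Type*} [AddCommGroup M] [Module (PowerSeries k) M] [Module k M]
  {ι : Type*} (b : Basis ι (PowerSeries k) M)

theorem finrank_quotient_restrictScalars_eq_sum [IsScalarTower k (PowerSeries k) M] [Fintype ι]
    (n : ι → ℕ) (N : Submodule (PowerSeries k) M)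
    (hN : ∀ z, z ∈ N ↔ ∀ i, X ^ n i ∣ b.repr z i) :
    finrank k (M ⧸ N.restrictScalars k) = ∑ i, n i := by
  let Φ : M →ₗ[k] ((i : ι) → Fin (n i) → k) :=
    LinearMap.pi fun i => LinearMap.pi fun m => coeff (m : ℕ) ∘ₗ (b.coord i).restrictScalars k
  have hΦ : ∀ z i m, Φ z i m = coeff m (b.repr z i) := fun _ _ _ => rfl
  have hker : N.restrictScalars k = LinearMap.ker Φ := by
    ext z
    simp only [Submodule.restrictScalars_mem, hN, X_pow_dvd_iff, LinearMap.mem_ker, funext_iff,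
      hΦ, Pi.zero_apply, Fin.forall_iff]
  have hsurj : Function.Surjective Φ := fun a =>
    ⟨∑ i, mk (fun m => if h : m < n i then a i ⟨m, h⟩ else 0) • b i, by
      ext i m
      rw [hΦ, b.repr_sum_self, coeff_mk, dif_pos m.isLt]⟩
  rw [((Submodule.quotEquivOfEq _ _ hker).trans (Φ.quotKerEquivOfSurjective hsurj)).finrank_eq]
  simp [Module.finrank_pi_fintype]

section Twisted

variable {e : ℕ} {ζ : k} (hζ : IsPrimitiveRoot ζ e) {σ : M →ₗ[k] M} {c : ι → Fin e}
  (hσ : ∀ z i, b.repr (σ z) i = ζ ^ (c i : ℕ) • rescale ζ (b.repr z i))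
include hζ hσ

theorem mem_eqLocus_id_iff (z : M) :
    z ∈ LinearMap.eqLocus σ LinearMap.id ↔ ∀ i m, coeff m (b.repr z i) ≠ 0 → e ∣ c i + m := by
  rw [LinearMap.mem_eqLocus, LinearMap.id_apply, ← b.repr.injective.eq_iff, Finsupp.ext_iff]
  simp only [hσ, pow_smul_rescale_eq_self_iff, hζ.pow_eq_one_iff_dvd]

theorem mem_span_eqLocus_id_iff [Fintype ι] [NeZero e] (z : M) :
    z ∈ Submodule.span (PowerSeries k) (LinearMap.eqLocus σ LinearMap.id : Set M) ↔
      ∀ i, X ^ ((-c i : Fin e) : ℕ) ∣ b.repr z i := by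
  constructor
  · intro hz
    induction hz using Submodule.span_induction with
    | mem x hx =>
      intro i
      rw [X_pow_dvd_iff]
      intro m hm
      by_contra hne
      exact (c i).not_dvd_val_add_of_lt_val_neg hm ((mem_eqLocus_id_iff b hζ hσ x).mp hx i m hne)
    | zero => simp
    | add x y _ _ hx hy => intro i; simpa using dvd_add (hx i) (hy i)
    | smul f x _ hx => intro i; simpa using (hx i).mul_left f
  · intro hz
    rw [← b.sum_repr z]
    refine Submodule.sum_mem _ fun i _ => ?_
    obtain ⟨g, hg⟩ := hz i
    rw [hg, mul_comm, mul_smul]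
    refine Submodule.smul_mem _ g (Submodule.subset_span ?_)
    rw [SetLike.mem_coe, mem_eqLocus_id_iff b hζ hσ]
    intro j m hm
    rw [map_smul, b.repr_self, Finsupp.smul_single, smul_eq_mul, mul_one] at hm
    rcases eq_or_ne i j with rfl | hij
    · rw [Finsupp.single_eq_same, coeff_X_pow] at hm
      obtain rfl : m = _ := by simpa using hm
      exact (c i).dvd_val_add_val_neg
    · simp [hij] at hm

end Twisted

end PowerSeries

section TwistedSigma

variable {k : Type*} [CommRing k] (ζ : k) {t : Type*} [AddCommGroup t] [Module k t]
  (w : t →ₗ[k] t)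

theorem twistedSigma_smul (f : PowerSeries k) (z : PowerSeries k ⊗[k] t) :
    twistedSigma k ζ w (f • z) = PowerSeries.rescale ζ f • twistedSigma k ζ w z := by
  induction z using TensorProduct.induction_on with
  | zero => simp
  | tmul g x => simp [twistedSigma, rescaleL, TensorProduct.smul_tmul']
  | add x y hx hy => rw [smul_add, map_add, hx, hy, map_add, smul_add]

theorem repr_twistedSigma {ι : Type*} [Fintype ι] (b : Basis ι k t) (c : ι → ℕ)
    (hb : ∀ i, w (b i) = ζ ^ c i • b i) (z : PowerSeries k ⊗[k] t) (i : ι) :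
    (Algebra.TensorProduct.basis (PowerSeries k) b).repr (twistedSigma k ζ w z) i =
      ζ ^ c i • PowerSeries.rescale ζ
        ((Algebra.TensorProduct.basis (PowerSeries k) b).repr z i) := by
  set b' := Algebra.TensorProduct.basis (PowerSeries k) b
  have hσb : ∀ j, twistedSigma k ζ w (b' j) = ζ ^ c j • b' j := fun j => by
    simp [b', twistedSigma, rescaleL, hb, TensorProduct.tmul_smul]
  have hσz :
      twistedSigma k ζ w z = ∑ j, (ζ ^ c j • PowerSeries.rescale ζ (b'.repr z j)) • b' j := by
    conv_lhs => rw [← b'.sum_repr z]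
    simp only [map_sum, twistedSigma_smul, hσb, smul_comm _ (ζ ^ _), ← smul_assoc]
  rw [hσz, b'.repr_sum_self]

end TwistedSigma

theorem twisted_fixed_module_codim_general
    (k : Type*) [Field k] (e : ℕ) (he : 1 ≤ e)
    (ζ : k) (hζ : IsPrimitiveRoot ζ e)
    (t : Type*) [AddCommGroup t] [Module k t] [FiniteDimensional k t]
    (w : t →ₗ[k] t) (hw : w ^ e = 1)
    (B : t →ₗ[k] t →ₗ[k] k)
    (hBnondeg : ∀ x, (∀ y, B x y = 0) → x = 0)
    (hBinv : ∀ x y, B (w x) (w y) = B x y) :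
    2 * Module.finrank k
        ((PowerSeries k ⊗[k] t) ⧸
          (Submodule.span (PowerSeries k)
              ((LinearMap.eqLocus (twistedSigma k ζ w) LinearMap.id :
                Submodule k (PowerSeries k ⊗[k] t)) : Set (PowerSeries k ⊗[k] t))).restrictScalars k)
      = e * (Module.finrank k t - Module.finrank k (LinearMap.eqLocus w LinearMap.id)) := by
  have : NeZero e := ⟨by omega⟩
  let E : Fin e → Submodule k t := fun i => End.eigenspace w (ζ ^ (i : ℕ))
  have hInt : DirectSum.IsInternal E := End.isInternal_eigenspace_pow hζ hw
  let b := hInt.collectedBasis fun i => finBasis k (E i)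
  have hb : ∀ α, w (b α) = ζ ^ (α.1 : ℕ) • b α := fun α =>
    End.mem_eigenspace_iff.mp (hInt.collectedBasis_mem _ α)
  have hdiag : ⨆ μ, End.eigenspace w μ = ⊤ := eq_top_iff.mpr <|
    (End.iSup_eigenspace_pow_eq_top hζ hw).ge.trans (iSup_le fun i => le_iSup _ _)
  have hsymm : ∀ i : Fin e, finrank k (E (-i)) = finrank k (E i) := fun i => by
    change finrank k (End.eigenspace w (ζ ^ ((-i : Fin e) : ℕ))) = _
    rw [hζ.pow_val_neg]
    exact End.finrank_eigenspace_inv hdiag hBnondeg hBinv _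
  have hfix : LinearMap.eqLocus w LinearMap.id = E 0 := by
    ext x
    simp [E]
  rw [PowerSeries.finrank_quotient_restrictScalars_eq_sum (Algebra.TensorProduct.basis _ b)
      (fun α => ((-α.1 : Fin e) : ℕ)) _
      (PowerSeries.mem_span_eqLocus_id_iff (c := Sigma.fst) _ hζ (repr_twistedSigma ζ w b _ hb)),
    finrank_eq_card_basis b, Fintype.card_sigma, Fintype.sum_sigma, hfix]
  simpa using Fin.two_mul_sum_mul_val_neg (fun i => finrank k (E i)) hsymm

theorem twisted_fixed_module_codim
    (k : Type*) [Field k] (e : ℕ) (he : 1 ≤ e) (he' : (e : k) ≠ 0)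
    (ζ : k) (hζ : IsPrimitiveRoot ζ e)
    (t : Type*) [AddCommGroup t] [Module k t] [FiniteDimensional k t]
    (w : t →ₗ[k] t) (hw : w ^ e = 1)
    (B : t →ₗ[k] t →ₗ[k] k)
    (hBsymm : ∀ x y, B x y = B y x)
    (hBnondeg : ∀ x, (∀ y, B x y = 0) → x = 0)
    (hBinv : ∀ x y, B (w x) (w y) = B x y) :
    2 * Module.finrank k
        ((PowerSeries k ⊗[k] t) ⧸
          (Submodule.span (PowerSeries k)
              ((LinearMap.eqLocus (twistedSigma k ζ w) LinearMap.id :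
                Submodule k (PowerSeries k ⊗[k] t)) : Set (PowerSeries k ⊗[k] t))).restrictScalars k)
      = e * (Module.finrank k t - Module.finrank k (LinearMap.eqLocus w LinearMap.id)) :=
  twisted_fixed_module_codim_general k e he ζ hζ t w hw B hBnondeg hBinv
end
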